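/- Let 𝒵₄₀ be ℂ⁵ with basis e₁,…,e₅ and bilinear multiplication given by e₁e₁ = e₂, e₁e₂ = (1/2)e₃, e₁e₃ = 2e₄, e₁e₄ = e₅, e₂e₁ = e₃, e₂e₂ = 3e₄, e₂e₃ = 8e₅, e₃e₁ = 6e₄, e₃e₂ = 12e₅, e₄e₁ = 4e₅, all other basis products zero. Then 𝒵₄₀ satisfies the left Zinbiel identity (x*y)*z = x*(y*z + z*y) for all x,y,z ∈ ℂ⁵, and 𝒵₄₀ is not 4-step nilpotent: the left-normed product ((((e₁*e₁)*e₁)*e₁)*e₁) = 24e₅ ≠ 0. -/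
import Mathlib


/-- The standard basis of `ℂ⁵`. -/
def ee (i : Fin 5) : Fin 5 → ℂ := Pi.single i 1

/-- Structure constants (0-indexed) of the algebra `𝒵₄₀`:
`e₁e₁ = e₂`, `e₁e₂ = (1/2)e₃`, `e₁e₃ = 2e₄`, `e₁e₄ = e₅`, `e₂e₁ = e₃`,
`e₂e₂ = 3e₄`, `e₂e₃ = 8e₅`, `e₃e₁ = 6e₄`, `e₃e₂ = 12e₅`, `e₄e₁ = 4e₅`. -/
noncomputable def cZ40 (i j : Fin 5) : Fin 5 → ℂ :=
  if i = 0 ∧ j = 0 then ee 1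
  else if i = 0 ∧ j = 1 then (1/2 : ℂ) • ee 2
  else if i = 0 ∧ j = 2 then (2 : ℂ) • ee 3
  else if i = 0 ∧ j = 3 then ee 4
  else if i = 1 ∧ j = 0 then ee 2
  else if i = 1 ∧ j = 1 then (3 : ℂ) • ee 3
  else if i = 1 ∧ j = 2 then (8 : ℂ) • ee 4
  else if i = 2 ∧ j = 0 then (6 : ℂ) • ee 3
  else if i = 2 ∧ j = 1 then (12 : ℂ) • ee 4
  else if i = 3 ∧ j = 0 then (4 : ℂ) • ee 4
  else 0

/-- Every vector in `ℂ⁵` is the obvious linear combination of the `ee i`. -/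
lemma Z40_basis_expand (x : Fin 5 → ℂ) : x = ∑ i, x i • ee i := by
  ext j
  simp [ee, Pi.single_apply, Finset.sum_apply, eq_comm]

/-- `𝒵₄₀` is a Zinbiel algebra which is not 4-step nilpotent:
`((((e₁e₁)e₁)e₁)e₁) = 24e₅ ≠ 0`. -/
theorem Z40_zinbiel_not_four_step_nilpotent
    (μ : (Fin 5 → ℂ) →ₗ[ℂ] (Fin 5 → ℂ) →ₗ[ℂ] (Fin 5 → ℂ))
    (hμ : ∀ i j, μ (ee i) (ee j) = cZ40 i j) :
    (∀ x y z, μ (μ x y) z = μ x (μ y z + μ z y)) ∧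
    μ (μ (μ (μ (ee 0) (ee 0)) (ee 0)) (ee 0)) (ee 0) = (24 : ℂ) • ee 4 ∧
    (24 : ℂ) • ee 4 ≠ (0 : Fin 5 → ℂ) := by
  have key : ∀ i j k, μ (μ (ee i) (ee j)) (ee k)
      = μ (ee i) (μ (ee j) (ee k) + μ (ee k) (ee j)) := by
    intro i j k
    fin_cases i <;> fin_cases j <;> fin_cases k <;>
      simp [hμ, cZ40, map_add, map_smul, smul_smul, smul_add] <;>
      module
  have step1 : ∀ i j (z : Fin 5 → ℂ), μ (μ (ee i) (ee j)) z
      = μ (ee i) (μ (ee j) z + μ z (ee j)) := by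
    intro i j z
    rw [Z40_basis_expand z]
    simp only [map_sum, map_smul, LinearMap.sum_apply, LinearMap.smul_apply, key,
      Finset.sum_add_distrib, map_add, smul_add]
  have step2 : ∀ i (y z : Fin 5 → ℂ), μ (μ (ee i) y) z
      = μ (ee i) (μ y z + μ z y) := by
    intro i y z
    rw [Z40_basis_expand y]
    simp only [map_sum, map_smul, LinearMap.sum_apply, LinearMap.smul_apply, step1,
      Finset.sum_add_distrib, map_add, smul_add]
  refine ⟨?_, ?_, ?_⟩
  · intro x y z
    rw [Z40_basis_expand x]
    simp only [map_sum, map_smul, LinearMap.sum_apply, LinearMap.smul_apply, step2]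
  · have h1 : μ (ee 0) (ee 0) = ee 1 := by simp [hμ, cZ40]
    have h2 : μ (ee 1) (ee 0) = ee 2 := by simp [hμ, cZ40]
    have h3 : μ (ee 2) (ee 0) = (6 : ℂ) • ee 3 := by simp [hμ, cZ40]
    have h4 : μ (ee 3) (ee 0) = (4 : ℂ) • ee 4 := by simp [hμ, cZ40]
    rw [h1, h2, h3, map_smul, LinearMap.smul_apply, h4, smul_smul]
    norm_num
  · intro h
    have := congrFun h 4
    simp [ee, Pi.single_apply] at this
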